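/- Let c, d : ℤ → ℝ be finitely supported functions. Suppose that for all real numbers s and t one has Σ_{n∈ℤ} c(n) e^{2s + nt} + Σ_{n∈ℤ} d(n) e^{−2s + nt} = Σ_{n∈ℤ} c(n) e^{2t + ns} + Σ_{n∈ℤ} d(n) e^{−2t + ns}. Then c(n) = 0 and d(n) = 0 for every n ∉ {−2, 2}, and moreover c(−2) = d(2). -/
import Mathlib

open Real

noncomputable def expChar (p : ℝ × ℝ) : Multiplicative (ℝ × ℝ) →* ℝ where
  toFun x := Real.exp (p.1 * (Multiplicative.toAdd x).1 + p.2 * (Multiplicative.toAdd x).2)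
  map_one' := by simp
  map_mul' x y := by
    simp only [toAdd_mul, Prod.fst_add, Prod.snd_add, ← Real.exp_add]
    ring_nf

lemma expChar_apply (p : ℝ × ℝ) (x : ℝ × ℝ) :
    expChar p (Multiplicative.ofAdd x) = Real.exp (p.1 * x.1 + p.2 * x.2) := rfl

lemma expChar_injective : Function.Injective expChar := by
  intro p q hpq
  have h1 := congrArg (fun f : Multiplicative (ℝ × ℝ) →* ℝ =>
    f (Multiplicative.ofAdd ((1 : ℝ), (0 : ℝ)))) hpq
  have h2 := congrArg (fun f : Multiplicative (ℝ × ℝ) →* ℝ =>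
    f (Multiplicative.ofAdd ((0 : ℝ), (1 : ℝ)))) hpq
  simp only [expChar_apply, mul_one, mul_zero, add_zero, zero_add] at h1 h2
  exact Prod.ext (Real.exp_injective h1) (Real.exp_injective h2)

noncomputable def expFam : ℝ × ℝ → (Multiplicative (ℝ × ℝ) → ℝ) :=
  fun p => ⇑(expChar p)

lemma expFam_li : LinearIndependent ℝ expFam :=
  (linearIndependent_monoidHom (Multiplicative (ℝ × ℝ)) ℝ).comp expChar expChar_injective

def gOne (n : ℤ) : ℝ × ℝ := ((2 : ℝ), (n : ℝ))
def gTwo (n : ℤ) : ℝ × ℝ := ((-2 : ℝ), (n : ℝ))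
def gThree (n : ℤ) : ℝ × ℝ := ((n : ℝ), (2 : ℝ))
def gFour (n : ℤ) : ℝ × ℝ := ((n : ℝ), (-2 : ℝ))

@[simp] lemma gOne_fst (n : ℤ) : (gOne n).1 = 2 := rfl
@[simp] lemma gOne_snd (n : ℤ) : (gOne n).2 = n := rfl
@[simp] lemma gTwo_fst (n : ℤ) : (gTwo n).1 = -2 := rfl
@[simp] lemma gTwo_snd (n : ℤ) : (gTwo n).2 = n := rfl
@[simp] lemma gThree_fst (n : ℤ) : (gThree n).1 = n := rfl
@[simp] lemma gThree_snd (n : ℤ) : (gThree n).2 = 2 := rfl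
@[simp] lemma gFour_fst (n : ℤ) : (gFour n).1 = n := rfl
@[simp] lemma gFour_snd (n : ℤ) : (gFour n).2 = -2 := rfl

lemma gOne_inj : Function.Injective gOne := fun a b hab =>
  by simpa using congrArg Prod.snd hab
lemma gTwo_inj : Function.Injective gTwo := fun a b hab =>
  by simpa using congrArg Prod.snd hab
lemma gThree_inj : Function.Injective gThree := fun a b hab =>
  by simpa using congrArg Prod.fst hab
lemma gFour_inj : Function.Injective gFour := fun a b hab =>
  by simpa using congrArg Prod.fst hab

lemma expand_aux (f : ℤ →₀ ℝ) (g : ℤ → ℝ × ℝ) (x : Multiplicative (ℝ × ℝ)) :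
    (Finsupp.linearCombination ℝ (expFam ∘ g)) f x
      = f.sum fun n a => a * Real.exp ((g n).1 * (Multiplicative.toAdd x).1
          + (g n).2 * (Multiplicative.toAdd x).2) := by
  rw [Finsupp.linearCombination_apply]
  rw [Finsupp.sum, Finsupp.sum, Finset.sum_apply]
  rfl

/-- The symmetry argument pinning down the universal gluing coefficients: if
`Σ c(n) e^{2s+nt} + Σ d(n) e^{-2s+nt}` is symmetric under exchanging `s` and `t`,
then `c` and `d` are supported on `{-2, 2}` and `c(-2) = d(2)`. -/
theorem gluing_coefficients_symmetry (c d : ℤ →₀ ℝ)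
    (h : ∀ s t : ℝ,
        (c.sum fun n cn => cn * Real.exp (2 * s + (n : ℝ) * t))
          + (d.sum fun n dn => dn * Real.exp (-2 * s + (n : ℝ) * t))
        = (c.sum fun n cn => cn * Real.exp (2 * t + (n : ℝ) * s))
          + (d.sum fun n dn => dn * Real.exp (-2 * t + (n : ℝ) * s))) :
    (∀ n : ℤ, n ≠ -2 → n ≠ 2 → c n = 0 ∧ d n = 0) ∧ c (-2) = d 2 := by
  classical
  set e : (ℝ × ℝ) →₀ ℝ :=
    c.mapDomain gOne + d.mapDomain gTwo - c.mapDomain gThree - d.mapDomain gFour with he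
  have key : Finsupp.linearCombination ℝ expFam e = 0 := by
    funext x
    set x1 : ℝ := (Multiplicative.toAdd x).1 with hx1
    set x2 : ℝ := (Multiplicative.toAdd x).2 with hx2
    rw [he]
    simp only [map_add, map_sub, Finsupp.linearCombination_mapDomain, Pi.add_apply,
      Pi.sub_apply, Pi.zero_apply]
    rw [expand_aux, expand_aux, expand_aux, expand_aux]
    simp only [gOne_fst, gOne_snd, gTwo_fst, gTwo_snd, gThree_fst, gThree_snd,
      gFour_fst, gFour_snd, ← hx1, ← hx2]
    have hs := h x1 x2
    have hC : (c.sum fun n a => a * Real.exp ((n : ℝ) * x1 + 2 * x2))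
        = c.sum fun n a => a * Real.exp (2 * x2 + (n : ℝ) * x1) :=
      Finsupp.sum_congr fun n _ => by rw [add_comm]
    have hD : (d.sum fun n a => a * Real.exp ((n : ℝ) * x1 + -2 * x2))
        = d.sum fun n a => a * Real.exp (-2 * x2 + (n : ℝ) * x1) :=
      Finsupp.sum_congr fun n _ => by rw [add_comm]
    linarith [hs, hC, hD]
  have he0 : e = 0 := linearIndependent_iff.mp expFam_li e key
  have eval : ∀ p : ℝ × ℝ,
      c.mapDomain gOne p + d.mapDomain gTwo p - c.mapDomain gThree p - d.mapDomain gFour p = 0 := by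
    intro p
    have := congrArg (fun f : (ℝ × ℝ) →₀ ℝ => f p) he0
    simpa [he, Finsupp.sub_apply, Finsupp.add_apply] using this
  constructor
  · intro n hn2 hn2'
    have hc : c n = 0 := by
      have := eval (gOne n)
      rw [Finsupp.mapDomain_apply gOne_inj,
        Finsupp.mapDomain_notin_range _ _ (by
          rintro ⟨m, hm⟩
          have : (-2 : ℝ) = 2 := by simpa using congrArg Prod.fst hm
          norm_num at this),
        Finsupp.mapDomain_notin_range _ _ (by
          rintro ⟨m, hm⟩
          have : (2 : ℝ) = (n : ℝ) := by simpa using congrArg Prod.snd hm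
          exact hn2' (by exact_mod_cast this.symm)),
        Finsupp.mapDomain_notin_range _ _ (by
          rintro ⟨m, hm⟩
          have : (-2 : ℝ) = (n : ℝ) := by simpa using congrArg Prod.snd hm
          exact hn2 (by exact_mod_cast this.symm))] at this
      simpa using this
    have hd : d n = 0 := by
      have := eval (gTwo n)
      rw [Finsupp.mapDomain_notin_range _ _ (by
          rintro ⟨m, hm⟩
          have : (2 : ℝ) = -2 := by simpa using congrArg Prod.fst hm
          norm_num at this),
        Finsupp.mapDomain_apply gTwo_inj,
        Finsupp.mapDomain_notin_range _ _ (by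
          rintro ⟨m, hm⟩
          have : (2 : ℝ) = (n : ℝ) := by simpa using congrArg Prod.snd hm
          exact hn2' (by exact_mod_cast this.symm)),
        Finsupp.mapDomain_notin_range _ _ (by
          rintro ⟨m, hm⟩
          have : (-2 : ℝ) = (n : ℝ) := by simpa using congrArg Prod.snd hm
          exact hn2 (by exact_mod_cast this.symm))] at this
      simpa using this
    exact ⟨hc, hd⟩
  · have := eval ((2 : ℝ), (-2 : ℝ))
    have h1 : ((2 : ℝ), (-2 : ℝ)) = gOne (-2) := by simp [gOne]
    have h4 : ((2 : ℝ), (-2 : ℝ)) = gFour 2 := by simp [gFour]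
    rw [show Finsupp.mapDomain gOne c ((2:ℝ), (-2:ℝ)) = c (-2) from by
        rw [h1, Finsupp.mapDomain_apply gOne_inj],
      show Finsupp.mapDomain gFour d ((2:ℝ), (-2:ℝ)) = d 2 from by
        rw [h4, Finsupp.mapDomain_apply gFour_inj],
      Finsupp.mapDomain_notin_range _ _ (by
        rintro ⟨m, hm⟩
        have : (-2 : ℝ) = 2 := by simpa using congrArg Prod.fst hm
        norm_num at this),
      Finsupp.mapDomain_notin_range _ _ (by
        rintro ⟨m, hm⟩
        have : (2 : ℝ) = -2 := by simpa using congrArg Prod.snd hm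
        norm_num at this)] at this
    linarith
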